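/- For every graph G, the intersection of all critical independent sets of G equals the intersection of all critical sets of G. -/
import Mathlib


open Finset

open scoped Classical

variable {V : Type*}

/-- The neighborhood `N(X)` of a set of vertices `X`. -/
noncomputable def nbhd [Fintype V] (G : SimpleGraph V) (X : Finset V) : Finset V :=
  Finset.univ.filter (fun v => ∃ x ∈ X, G.Adj v x)

/-- The difference `d(X) = |X| - |N(X)|`. -/
noncomputable def diffd [Fintype V] (G : SimpleGraph V) (X : Finset V) : ℤ :=
  (X.card : ℤ) - ((nbhd G X).card : ℤ)

/-- The critical difference `d_c(G) = max{d(X) : X ⊆ V}`. -/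
noncomputable def critDiff [Fintype V] (G : SimpleGraph V) : ℤ :=
  Finset.univ.powerset.sup' ⟨∅, Finset.empty_mem_powerset _⟩ (diffd G)

/-- A set of vertices is independent if no two of its vertices are adjacent. -/
def IsIndep [Fintype V] (G : SimpleGraph V) (A : Finset V) : Prop :=
  ∀ a ∈ A, ∀ b ∈ A, ¬ G.Adj a b

/-- A critical independent set: independent with `d(A) = d_c(G)`. -/
def IsCritIndep [Fintype V] (G : SimpleGraph V) (A : Finset V) : Prop :=
  IsIndep G A ∧ diffd G A = critDiff G

/-- The independence number `α(G)`. -/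
noncomputable def indepNum [Fintype V] (G : SimpleGraph V) : ℕ :=
  (Finset.univ.powerset.filter (fun A => IsIndep G A)).sup Finset.card

/-- The independence number of the induced subgraph `G[X]`,
realized as the largest independent set contained in `X`. -/
noncomputable def indepNumOn [Fintype V] (G : SimpleGraph V) (X : Finset V) : ℕ :=
  (X.powerset.filter (fun A => IsIndep G A)).sup Finset.card

/-- A matching: a set of edges of `G`, pairwise vertex-disjoint. -/
def IsMatchingSet [Fintype V] (G : SimpleGraph V) (M : Finset (Sym2 V)) : Prop :=
  (∀ e ∈ M, e ∈ G.edgeSet) ∧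
  (∀ e ∈ M, ∀ f ∈ M, e ≠ f → ∀ v : V, v ∈ e → v ∉ f)

/-- The matching number `μ(G)`. -/
noncomputable def matchNum [Fintype V] (G : SimpleGraph V) : ℕ :=
  ((Finset.univ : Finset (Sym2 V)).powerset.filter (fun M => IsMatchingSet G M)).sup Finset.card

/-- The matching number of the induced subgraph `G[X]`, realized as the
largest matching of `G` all of whose edges have both endpoints in `X`. -/
noncomputable def matchNumOn [Fintype V] (G : SimpleGraph V) (X : Finset V) : ℕ :=
  ((Finset.univ : Finset (Sym2 V)).powerset.filter
    (fun M => IsMatchingSet G M ∧ ∀ e ∈ M, ∀ v ∈ e, v ∈ X)).sup Finset.card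

/-- `ker(G)`: the intersection of all critical independent sets. -/
noncomputable def kerG [Fintype V] (G : SimpleGraph V) : Finset V :=
  Finset.univ.filter (fun v => ∀ A : Finset V, IsCritIndep G A → v ∈ A)

/-- A maximum independent set, i.e. a member of `Ω(G)`. -/
def IsMaxIndep [Fintype V] (G : SimpleGraph V) (S : Finset V) : Prop :=
  IsIndep G S ∧ S.card = indepNum G

/-- `core(G)`: the intersection of all maximum independent sets. -/
noncomputable def coreG [Fintype V] (G : SimpleGraph V) : Finset V :=
  Finset.univ.filter (fun v => ∀ S : Finset V, IsMaxIndep G S → v ∈ S)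

/-- `corona(G)`: the union of all maximum independent sets. -/
noncomputable def coronaG [Fintype V] (G : SimpleGraph V) : Finset V :=
  Finset.univ.filter (fun v => ∃ S : Finset V, IsMaxIndep G S ∧ v ∈ S)

/-- `G` has no isolated vertices. -/
def NoIsolated (G : SimpleGraph V) : Prop := ∀ v : V, ∃ w, G.Adj v w

lemma diffd_le_critDiff' [Fintype V] (G : SimpleGraph V) (X : Finset V) :
    diffd G X ≤ critDiff G :=
  Finset.le_sup' (diffd G) (Finset.mem_powerset.2 (Finset.subset_univ X))

/-- `ker(G)` equals the intersection of all critical sets. -/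
theorem stmt_2 {V : Type*} [Fintype V] (G : SimpleGraph V)
    (hiso : NoIsolated G)
    (hZhang : ∃ A : Finset V, IsIndep G A ∧ diffd G A = critDiff G) :
    kerG G =
      Finset.univ.filter (fun v => ∀ U : Finset V, diffd G U = critDiff G → v ∈ U) := by
  ext v
  simp only [kerG, mem_filter, mem_univ, true_and]
  constructor
  · intro h U hU
    set A := U.filter (fun a => ∀ b ∈ U, ¬ G.Adj a b) with hAdef
    have hAU : A ⊆ U := filter_subset _ _
    have hIndep : IsIndep G A := fun a ha b hb hab =>
      (mem_filter.1 ha).2 b (hAU hb) hab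
    have hNA : nbhd G A ⊆ nbhd G U := by
      intro w hw
      simp only [nbhd, mem_filter, mem_univ, true_and] at hw ⊢
      obtain ⟨x, hx, hadj⟩ := hw
      exact ⟨x, hAU hx, hadj⟩
    have hB : U \ A ⊆ nbhd G U := by
      intro b hb
      rw [mem_sdiff, hAdef, mem_filter] at hb
      obtain ⟨hbU, hb2⟩ := hb
      push_neg at hb2
      obtain ⟨c, hc, hadj⟩ := hb2 hbU
      simp only [nbhd, mem_filter, mem_univ, true_and]
      exact ⟨c, hc, hadj⟩
    have hdisj : Disjoint (nbhd G A) (U \ A) := by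
      rw [Finset.disjoint_left]
      intro w hw hwB
      simp only [nbhd, mem_filter, mem_univ, true_and] at hw
      obtain ⟨a, haA, hadj⟩ := hw
      exact (mem_filter.1 haA).2 w (mem_sdiff.1 hwB).1 hadj.symm
    have hcard : (nbhd G A).card + (U \ A).card ≤ (nbhd G U).card := by
      rw [← card_union_of_disjoint hdisj]
      exact card_le_card (union_subset hNA hB)
    have hle : A.card ≤ U.card := card_le_card hAU
    have hUA : (U \ A).card = U.card - A.card := card_sdiff_of_subset hAU
    have hge : diffd G U ≤ diffd G A := by
      unfold diffd
      omega
    have hAc : diffd G A = critDiff G :=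
      le_antisymm (diffd_le_critDiff' G A) (hU ▸ hge)
    exact hAU (h A ⟨hIndep, hAc⟩)
  · intro h A hA
    exact h A hA.2
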